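/- arXiv:2006.06116 — 5 statements merged into one kernel-verified Lean document; each statement's English description precedes it below -/
import Mathlib

section
/- For every nonnegative integer m, the central binomial coefficient satisfies C(m, ⌊m/2⌋) = ∑_{k=0}^{m} (-1)^k · C(m,k) · 2^{m-k} · Cat(k), where Cat(k) = C(2k,k)/(k+1) is the k-th Catalan number. -/
open Finset

private lemma pascal2 (n j : ℕ) :
    (n + 2).choose (j + 2) = n.choose j + 2 * n.choose (j + 1) + n.choose (j + 2) := by
  show ((n + 1) + 1).choose ((j + 1) + 1) = _
  rw [Nat.choose_succ_succ' (n + 1) (j + 1), Nat.choose_succ_succ' n j,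
    Nat.choose_succ_succ' n (j + 1)]
  ring

private lemma central2 (k : ℕ) :
    (2 * k + 2).choose (k + 1) = 2 * (2 * k).choose k + 2 * (2 * k).choose (k + 1) := by
  show ((2 * k + 1) + 1).choose (k + 1) = _
  rw [Nat.choose_succ_succ' (2 * k + 1) k]
  have h2 : (2 * k + 1).choose k = (2 * k + 1).choose (k + 1) := by
    rw [← Nat.choose_symm (show k + 1 ≤ 2 * k + 1 by omega)]
    congr 1
    omega
  rw [Nat.choose_succ_succ' (2 * k) k] at h2 ⊢
  omega

private lemma central1 (t : ℕ) :
    (2 * t + 2).choose (t + 1) = 2 * (2 * t + 1).choose (t + 1) := by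
  show ((2 * t + 1) + 1).choose (t + 1) = _
  rw [Nat.choose_succ_succ' (2 * t + 1) t]
  have h2 : (2 * t + 1).choose t = (2 * t + 1).choose (t + 1) := by
    rw [← Nat.choose_symm (show t + 1 ≤ 2 * t + 1 by omega)]
    congr 1
    omega
  omega

private def F (m a : ℕ) : ℤ :=
  ∑ k ∈ range (m + 1), (-1 : ℤ) ^ k * (m.choose k : ℤ) * 2 ^ (m - k) * ((2 * k).choose (k + a) : ℤ)

private lemma Fstep (m a : ℕ) :
    F (m + 1) a = 2 * F m a -
      ∑ k ∈ range (m + 1),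
        (-1 : ℤ) ^ k * (m.choose k : ℤ) * 2 ^ (m - k) * ((2 * k + 2).choose (k + 1 + a) : ℤ) := by
  have h0 : F (m + 1) a =
      (∑ k ∈ range (m + 1),
        (-1 : ℤ) ^ (k + 1) * ((m + 1).choose (k + 1) : ℤ) * 2 ^ (m - k) *
          ((2 * (k + 1)).choose (k + 1 + a) : ℤ)) + 2 ^ (m + 1) * ((Nat.choose 0 a : ℕ) : ℤ) := by
    unfold F
    rw [Finset.sum_range_succ']
    simp [Nat.succ_sub_succ]
  set g : ℕ → ℤ := fun j => (-1 : ℤ) ^ j * (m.choose j : ℤ) * 2 ^ (m + 1 - j) * ((2 * j).choose (j + a) : ℤ) with hg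
  have hsum2 : ∑ j ∈ range (m + 1), g j = 2 * F m a := by
    unfold F
    rw [Finset.mul_sum]
    refine Finset.sum_congr rfl fun j hj => ?_
    have hj' : j ≤ m := by simpa using Nat.lt_succ_iff.mp (Finset.mem_range.mp hj)
    have : m + 1 - j = (m - j) + 1 := by omega
    rw [hg]; simp only []
    rw [this, pow_succ]
    ring
  have hQ : ∑ k ∈ range (m + 1), g (k + 1)
      = 2 * F m a - 2 ^ (m + 1) * ((Nat.choose 0 a : ℕ) : ℤ) := by
    have h1 := Finset.sum_range_succ' g (m + 1)
    have h2 : ∑ j ∈ range (m + 2), g j = ∑ j ∈ range (m + 1), g j := by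
      rw [Finset.sum_range_succ]
      have : (m.choose (m + 1) : ℤ) = 0 := by simp [Nat.choose_eq_zero_of_lt]
      simp [hg, this]
    have hg0 : g 0 = 2 ^ (m + 1) * ((Nat.choose 0 a : ℕ) : ℤ) := by simp [hg]
    rw [h2, hsum2] at h1
    rw [hg0] at h1
    linarith
  have hsplit : ∀ k ∈ range (m + 1),
      (-1 : ℤ) ^ (k + 1) * ((m + 1).choose (k + 1) : ℤ) * 2 ^ (m - k) *
          ((2 * (k + 1)).choose (k + 1 + a) : ℤ)
      = -((-1 : ℤ) ^ k * (m.choose k : ℤ) * 2 ^ (m - k) * ((2 * k + 2).choose (k + 1 + a) : ℤ))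
        + g (k + 1) := by
    intro k hk
    rw [hg]; simp only []
    rw [Nat.choose_succ_succ m k]
    have e1 : 2 * (k + 1) = 2 * k + 2 := by ring
    have e2 : m + 1 - (k + 1) = m - k := by omega
    rw [e1, e2]
    push_cast
    ring
  rw [h0, Finset.sum_congr rfl hsplit, Finset.sum_add_distrib, Finset.sum_neg_distrib, hQ]
  ring

private lemma key (m : ℕ) : ∀ a : ℕ, F m a =
    (-1 : ℤ) ^ m * (if (m + a) % 2 = 0 then ((m.choose ((m + a) / 2) : ℕ) : ℤ) else 0) := by
  induction m with
  | zero =>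
    intro a
    unfold F
    rw [Finset.sum_range_one]
    simp only [Nat.zero_add]
    match a with
    | 0 => norm_num
    | a + 1 =>
      rw [Nat.choose_eq_zero_of_lt (Nat.succ_pos a)]
      by_cases h : (a + 1) % 2 = 0
      · rw [if_pos h, Nat.choose_eq_zero_of_lt (show 0 < (a + 1) / 2 by omega)]
        norm_num
      · rw [if_neg h]
        norm_num
  | succ m ih =>
    intro a
    rw [Fstep]
    match a with
    | 0 =>
      have hexp : ∀ k ∈ range (m + 1),
          (-1 : ℤ) ^ k * (m.choose k : ℤ) * 2 ^ (m - k) * ((2 * k + 2).choose (k + 1 + 0) : ℤ)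
          = 2 * ((-1 : ℤ) ^ k * (m.choose k : ℤ) * 2 ^ (m - k) * ((2 * k).choose (k + 0) : ℤ))
            + 2 * ((-1 : ℤ) ^ k * (m.choose k : ℤ) * 2 ^ (m - k) * ((2 * k).choose (k + 1) : ℤ)) := by
        intro k hk
        have h4 : ((2 * k + 2).choose (k + 1 + 0) : ℤ)
            = 2 * ((2 * k).choose (k + 0) : ℤ) + 2 * ((2 * k).choose (k + 1) : ℤ) := by
          show ((2 * k + 2).choose (k + 1) : ℤ) = 2 * ((2 * k).choose k : ℤ) + _
          rw [central2 k]
          push_cast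
          ring
        rw [h4]
        ring
      rw [Finset.sum_congr rfl hexp, Finset.sum_add_distrib, ← Finset.mul_sum, ← Finset.mul_sum]
      have e0 : (∑ k ∈ range (m + 1),
          (-1 : ℤ) ^ k * (m.choose k : ℤ) * 2 ^ (m - k) * ((2 * k).choose (k + 0) : ℤ)) = F m 0 := rfl
      have e1 : (∑ k ∈ range (m + 1),
          (-1 : ℤ) ^ k * (m.choose k : ℤ) * 2 ^ (m - k) * ((2 * k).choose (k + 1) : ℤ)) = F m 1 := rfl
      rw [e0, e1, ih 0, ih 1]
      rcases Nat.even_or_odd m with he | ho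
      · obtain ⟨t, rfl⟩ := he
        have h1 : (t + t + 0) % 2 = 0 := by omega
        have h2 : (t + t + 1) % 2 ≠ 0 := by omega
        have h3 : (t + t + 1 + 0) % 2 ≠ 0 := by omega
        rw [if_pos h1, if_neg h2, if_neg h3]
        ring
      · obtain ⟨t, rfl⟩ := ho
        have h1 : (2 * t + 1 + 0) % 2 ≠ 0 := by omega
        have h2 : (2 * t + 1 + 1) % 2 = 0 := by omega
        have h3 : (2 * t + 1 + 1 + 0) % 2 = 0 := by omega
        rw [if_neg h1, if_pos h2, if_pos h3]
        have h4 : (2 * t + 1 + 1 + 0) / 2 = t + 1 := by omega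
        have h5 : (2 * t + 1 + 1) / 2 = t + 1 := by omega
        simp only [h4, h5]
        have h6 : ((2 * t + 1 + 1).choose (t + 1) : ℤ) = 2 * ((2 * t + 1).choose (t + 1) : ℤ) := by
          exact_mod_cast central1 t
        rw [h6, pow_succ]
        ring
    | b + 1 =>
      have hexp : ∀ k ∈ range (m + 1),
          (-1 : ℤ) ^ k * (m.choose k : ℤ) * 2 ^ (m - k) * ((2 * k + 2).choose (k + 1 + (b + 1)) : ℤ)
          = ((-1 : ℤ) ^ k * (m.choose k : ℤ) * 2 ^ (m - k) * ((2 * k).choose (k + b) : ℤ))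
            + 2 * ((-1 : ℤ) ^ k * (m.choose k : ℤ) * 2 ^ (m - k) * ((2 * k).choose (k + (b + 1)) : ℤ))
            + ((-1 : ℤ) ^ k * (m.choose k : ℤ) * 2 ^ (m - k) * ((2 * k).choose (k + (b + 2)) : ℤ)) := by
        intro k hk
        have h4 : ((2 * k + 2).choose (k + 1 + (b + 1)) : ℤ)
            = ((2 * k).choose (k + b) : ℤ) + 2 * ((2 * k).choose (k + (b + 1)) : ℤ)
              + ((2 * k).choose (k + (b + 2)) : ℤ) := by
          rw [show k + 1 + (b + 1) = (k + b) + 2 by omega,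
            show k + (b + 1) = k + b + 1 by omega, show k + (b + 2) = k + b + 2 by omega,
            pascal2 (2 * k) (k + b)]
          push_cast
          try ring
        rw [h4]
        try ring
      rw [Finset.sum_congr rfl hexp, Finset.sum_add_distrib, Finset.sum_add_distrib,
        ← Finset.mul_sum]
      have e0 : (∑ k ∈ range (m + 1),
          (-1 : ℤ) ^ k * (m.choose k : ℤ) * 2 ^ (m - k) * ((2 * k).choose (k + b) : ℤ)) = F m b := rfl
      have e1 : (∑ k ∈ range (m + 1),
          (-1 : ℤ) ^ k * (m.choose k : ℤ) * 2 ^ (m - k) * ((2 * k).choose (k + (b + 1)) : ℤ)) = F m (b + 1) := rfl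
      have e2 : (∑ k ∈ range (m + 1),
          (-1 : ℤ) ^ k * (m.choose k : ℤ) * 2 ^ (m - k) * ((2 * k).choose (k + (b + 2)) : ℤ)) = F m (b + 2) := rfl
      rw [e0, e1, e2, ih b, ih (b + 1), ih (b + 2)]
      rcases Nat.even_or_odd (m + b) with he | ho
      · obtain ⟨t, ht⟩ := he
        have h1 : (m + b) % 2 = 0 := by omega
        have h2 : (m + (b + 1)) % 2 ≠ 0 := by omega
        have h3 : (m + (b + 2)) % 2 = 0 := by omega
        have h4 : (m + 1 + (b + 1)) % 2 = 0 := by omega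
        rw [if_pos h1, if_neg h2, if_pos h3, if_pos h4]
        have h5 : (m + (b + 2)) / 2 = (m + b) / 2 + 1 := by omega
        have h6 : (m + 1 + (b + 1)) / 2 = (m + b) / 2 + 1 := by omega
        rw [h5, h6]
        have h7 : ((m + 1).choose ((m + b) / 2 + 1) : ℤ)
            = (m.choose ((m + b) / 2) : ℤ) + (m.choose ((m + b) / 2 + 1) : ℤ) := by
          rw [Nat.choose_succ_succ' m ((m + b) / 2)]
          push_cast
          ring
        rw [h7, pow_succ]
        ring
      · obtain ⟨t, ht⟩ := ho
        have h1 : (m + b) % 2 ≠ 0 := by omega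
        have h2 : (m + (b + 1)) % 2 = 0 := by omega
        have h3 : (m + (b + 2)) % 2 ≠ 0 := by omega
        have h4 : (m + 1 + (b + 1)) % 2 ≠ 0 := by omega
        rw [if_neg h1, if_pos h2, if_neg h3, if_neg h4]
        ring

private lemma catalan_int (k : ℕ) :
    (catalan k : ℤ) = ((2 * k).choose k : ℤ) - ((2 * k).choose (k + 1) : ℤ) := by
  have h1 : ((k : ℤ) + 1) * (catalan k : ℤ) = ((2 * k).choose k : ℤ) := by
    have h := succ_mul_catalan_eq_centralBinom k
    have h' : k.centralBinom = (2 * k).choose k := rfl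
    rw [h'] at h
    exact_mod_cast h
  have h2 : ((2 * k).choose (k + 1) : ℤ) * ((k : ℤ) + 1) = ((2 * k).choose k : ℤ) * (k : ℤ) := by
    have h := Nat.choose_succ_right_eq (2 * k) k
    rw [show 2 * k - k = k by omega] at h
    exact_mod_cast h
  have hne : ((k : ℤ) + 1) ≠ 0 := by positivity
  apply mul_left_cancel₀ hne
  linear_combination h1 + h2

/-- **Inverse binomial transform of Catalan numbers.**
For every nonnegative integer `m`, the central binomial coefficient `C(m, ⌊m/2⌋)`
equals `∑_{k=0}^{m} (-1)^k · C(m,k) · 2^{m-k} · Cat(k)`, where `Cat k` is the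
`k`-th Catalan number. -/
theorem central_binom_eq_alternating_sum_catalan (m : ℕ) :
    (m.choose (m / 2) : ℤ) =
      ∑ k ∈ Finset.range (m + 1),
        (-1 : ℤ) ^ k * (m.choose k : ℤ) * 2 ^ (m - k) * (catalan k : ℤ) := by
  have hsplit : ∑ k ∈ Finset.range (m + 1),
      (-1 : ℤ) ^ k * (m.choose k : ℤ) * 2 ^ (m - k) * (catalan k : ℤ) = F m 0 - F m 1 := by
    unfold F
    rw [← Finset.sum_sub_distrib]
    refine Finset.sum_congr rfl fun k hk => ?_
    rw [catalan_int k]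
    simp only [Nat.add_zero]
    ring
  rw [hsplit, key m 0, key m 1]
  rcases Nat.even_or_odd m with he | ho
  · obtain ⟨t, rfl⟩ := he
    have h1 : (t + t + 0) % 2 = 0 := by omega
    have h2 : (t + t + 1) % 2 ≠ 0 := by omega
    rw [if_pos h1, if_neg h2]
    have h3 : (t + t + 0) / 2 = (t + t) / 2 := by omega
    rw [h3]
    have h4 : (-1 : ℤ) ^ (t + t) = 1 := Even.neg_one_pow ⟨t, rfl⟩
    rw [h4]
    ring
  · obtain ⟨t, rfl⟩ := ho
    have h1 : (2 * t + 1 + 0) % 2 ≠ 0 := by omega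
    have h2 : (2 * t + 1 + 1) % 2 = 0 := by omega
    rw [if_neg h1, if_pos h2]
    have h3 : (2 * t + 1 + 1) / 2 = t + 1 := by omega
    have h4 : (2 * t + 1) / 2 = t := by omega
    rw [h3, h4]
    have h5 : (2 * t + 1).choose t = (2 * t + 1).choose (t + 1) := by
      rw [← Nat.choose_symm (show t + 1 ≤ 2 * t + 1 by omega)]
      congr 1
      omega
    rw [h5]
    have h6 : (-1 : ℤ) ^ (2 * t + 1) = -1 := Odd.neg_one_pow ⟨t, by ring⟩
    rw [h6]
    ring
end

section
/- For every integer m ≥ 1, the integral over the circle group U(1) (with Haar probability measure) of ∏_{i=1}^m (x_i + x_i^{-1} + u + u^{-1}) du equals ∑_{ℓ=0}^{⌊m/2⌋} C(2ℓ, ℓ) · ∑_{1 ≤ i_1 < ⋯ < i_{m-2ℓ} ≤ m} ∏_{j=1}^{m-2ℓ} (x_{i_j} + x_{i_j}^{-1}), where the inner sum is 1 when m-2ℓ = 0. -/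
/-! The integrand is `P (u + u⁻¹)` for `P = ∏ i, (X + (x i + (x i)⁻¹))`, whose coefficient of
`X ^ k` is the elementary symmetric sum of degree `m - k` in the `x i + (x i)⁻¹` (Vieta).
Since `u ^ n` has mean `0` over the circle unless `n = 0`, expanding `(u + u⁻¹) ^ k` binomially
shows that its mean is the central binomial coefficient `C(2ℓ, ℓ)` for `k = 2ℓ` and `0` for odd `k`;
the formula follows by linearity of the mean. -/

open Complex Real
open Finset Polynomial

theorem Finset.sum_range_succ_ite_even {M : Type*} [AddCommMonoid M] (f : ℕ → M) (n : ℕ) :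
    ∑ k ∈ range (n + 1), (if Even k then f k else 0) = ∑ l ∈ range (n / 2 + 1), f (2 * l) := by
  have : {k ∈ range (n + 1) | Even k} = (range (n / 2 + 1)).image (2 * ·) := by
    ext k
    simp only [mem_filter, mem_range, mem_image, even_iff_exists_two_mul]
    constructor
    · rintro ⟨hk, l, rfl⟩
      exact ⟨l, by omega, rfl⟩
    · rintro ⟨l, hl, rfl⟩
      exact ⟨by omega, l, rfl⟩
  rw [← sum_filter, this, sum_image fun a _ b _ h => by simpa using h]

theorem add_inv_pow_eq_sum_zpow {K : Type*} [Field K] {u : K} (hu : u ≠ 0) (k : ℕ) :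
    (u + u⁻¹) ^ k = ∑ j ∈ range (k + 1), (k.choose j : K) • u ^ (2 * j - k : ℤ) := by
  rw [add_pow]
  refine sum_congr rfl fun j hj => ?_
  have hjk : j ≤ k := Nat.lt_succ_iff.mp (mem_range.mp hj)
  rw [smul_eq_mul, show (2 * j - k : ℤ) = j - (k - j : ℕ) by push_cast [hjk]; ring,
    zpow_sub₀ hu, zpow_natCast, zpow_natCast, inv_pow]
  ring

theorem ContinuousOn.circleIntegrable_of_compl_singleton {E : Type*} [NormedAddCommGroup E]
    {f : ℂ → E} {c : ℂ} {R : ℝ} (hf : ContinuousOn f {c}ᶜ) : CircleIntegrable f c R := by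
  rcases eq_or_ne R 0 with rfl | hR
  · exact circleIntegrable_zero_radius
  · exact (hf.mono fun _ hz => Metric.ne_of_mem_sphere hz (abs_ne_zero.mpr hR)).circleIntegrable'

theorem circleAverage_sub_zpow (c : ℂ) (R : ℝ) (n : ℤ) :
    circleAverage (fun z => (z - c) ^ n) c R = if n = 0 then 1 else 0 := by
  split_ifs with hn
  · simp [hn, circleAverage_const]
  rcases eq_or_ne R 0 with rfl | hR
  · simp [zero_zpow n hn]
  have hR' : |R| ≠ 0 := abs_ne_zero.mpr hR
  have hsphere : Set.EqOn (fun z => (z - c)⁻¹ • (z - c) ^ n) (fun z => (z - c) ^ (n - 1))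
      (Metric.sphere c |R|) := fun z hz => by
    dsimp only
    rw [smul_eq_mul, zpow_sub_one₀ (sub_ne_zero.mpr (Metric.ne_of_mem_sphere hz hR')), mul_comm]
  rw [← circleAverage_abs_radius, circleAverage_eq_circleIntegral hR',
    circleIntegral.integral_congr (abs_nonneg R) hsphere,
    circleIntegral.integral_sub_zpow_of_ne (by omega), smul_zero]

theorem circleAverage_add_inv_pow (k : ℕ) :
    circleAverage (fun u : ℂ => (u + u⁻¹) ^ k) 0 1 =
      if Even k then (k.choose (k / 2) : ℂ) else 0 := by
  have hzpow (n : ℤ) : circleAverage (fun z : ℂ => z ^ n) 0 1 = if n = 0 then 1 else 0 := by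
    simpa using circleAverage_sub_zpow 0 1 n
  rw [circleAverage_congr_sphere (f₂ := fun u => ∑ j ∈ range (k + 1),
      (k.choose j : ℂ) • u ^ (2 * j - k : ℤ)) fun u hu =>
      add_inv_pow_eq_sum_zpow (ne_zero_of_mem_unit_sphere ⟨u, by simpa using hu⟩) k,
    circleAverage_fun_sum fun j _ =>
      ((continuousOn_zpow₀ _).circleIntegrable_of_compl_singleton).const_fun_smul]
  simp_rw [circleAverage_fun_smul, hzpow, sub_eq_zero, smul_ite, smul_eq_mul, mul_one, mul_zero]
  split_ifs with hk
  · obtain ⟨l, rfl⟩ := hk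
    rw [sum_eq_single l] <;> grind
  · exact sum_eq_zero fun j _ => if_neg (by grind)

theorem circleAverage_eval_add_inv (p : ℂ[X]) :
    circleAverage (fun u : ℂ => p.eval (u + u⁻¹)) 0 1 =
      ∑ l ∈ range (p.natDegree / 2 + 1), ((2 * l).choose l : ℂ) * p.coeff (2 * l) := by
  simp_rw [eval_eq_sum_range, ← smul_eq_mul]
  rw [circleAverage_fun_sum fun k _ =>
    ContinuousOn.circleIntegrable_of_compl_singleton (by fun_prop (disch := grind))]
  simp_rw [circleAverage_fun_smul, circleAverage_add_inv_pow, smul_ite, smul_zero]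
  rw [sum_range_succ_ite_even]
  refine sum_congr rfl fun l _ => ?_
  simp only [smul_eq_mul]
  rw [Nat.mul_div_cancel_left l two_pos, mul_comm]

theorem circleAverage_zero_one_eq_integral_exp (f : ℂ → ℂ) :
    circleAverage f 0 1 =
      1 / (2 * (π : ℂ)) * ∫ θ in (0:ℝ)..(2 * π), f (Complex.exp (θ * Complex.I)) := by
  simp [circleAverage_def, circleMap_zero]

theorem circle_autocorrelation_product_general (m : ℕ) (x : Fin m → ℂ) :
    (1 / (2 * (π : ℂ))) * ∫ θ in (0:ℝ)..(2 * π),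
        ∏ i, (x i + (x i)⁻¹ + Complex.exp (θ * Complex.I)
              + (Complex.exp (θ * Complex.I))⁻¹)
      = ∑ ℓ ∈ Finset.range (m / 2 + 1), ((2 * ℓ).choose ℓ : ℂ) *
          ∑ s ∈ Finset.powersetCard (m - 2 * ℓ) (Finset.univ : Finset (Fin m)),
            ∏ i ∈ s, (x i + (x i)⁻¹) := by
  set P : ℂ[X] := ∏ i, (X + C (x i + (x i)⁻¹))
  have hP (u : ℂ) : P.eval (u + u⁻¹) = ∏ i, (x i + (x i)⁻¹ + u + u⁻¹) := by
    simp only [P, eval_prod, eval_add, eval_X, eval_C]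
    exact prod_congr rfl fun i _ => by ring
  have hdeg : P.natDegree = m := by
    simp only [P, natDegree_prod_of_monic _ _ fun i _ => monic_X_add_C _, natDegree_X_add_C,
      sum_const, card_univ, Fintype.card_fin, smul_eq_mul, mul_one]
  refine (circleAverage_zero_one_eq_integral_exp
    fun u => ∏ i, (x i + (x i)⁻¹ + u + u⁻¹)).symm.trans ?_
  simp_rw [← hP, circleAverage_eval_add_inv, hdeg]
  refine sum_congr rfl fun l hl => ?_
  have hl' : 2 * l ≤ #(univ : Finset (Fin m)) := by
    rw [card_univ, Fintype.card_fin]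
    grind
  rw [Finset.prod_X_add_C_coeff _ _ hl', card_univ, Fintype.card_fin]

/-- **Auto-correlation over `U(1)` (genus-one torus case).**
With `U(1)` parametrized as `u = exp(iθ)` and Haar probability measure `dθ/(2π)`
(so `∫ u^k du = δ(k=0)`), for every `m ≥ 1` and nonzero `x₁, …, x_m ∈ ℂ`:
`∫_{U(1)} ∏_{i=1}^m (x_i + x_i⁻¹ + u + u⁻¹) du
  = ∑_{ℓ=0}^{⌊m/2⌋} C(2ℓ,ℓ) ∑_{1≤i₁<⋯<i_{m-2ℓ}≤m} ∏_j (x_{i_j} + x_{i_j}⁻¹)`,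
where the inner sum over subsets of size `m - 2ℓ` is `1` when `m - 2ℓ = 0`. -/
theorem circle_autocorrelation_product (m : ℕ) (hm : 1 ≤ m)
    (x : Fin m → ℂ) (hx : ∀ i, x i ≠ 0) :
    (1 / (2 * (π : ℂ))) * ∫ θ in (0:ℝ)..(2 * π),
        ∏ i, (x i + (x i)⁻¹ + Complex.exp (θ * Complex.I)
              + (Complex.exp (θ * Complex.I))⁻¹)
      = ∑ ℓ ∈ Finset.range (m / 2 + 1), ((2 * ℓ).choose ℓ : ℂ) *
          ∑ s ∈ Finset.powersetCard (m - 2 * ℓ) (Finset.univ : Finset (Fin m)),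
            ∏ i ∈ s, (x i + (x i)⁻¹) :=
  circle_autocorrelation_product_general m x
end

section
/- Let (a,b) be a partition with a - b even, and set z = (a-b)/2. Then ∑_{(p,q) ∈ Φ(a,b)} (min(p,q) + 1) = (b+1)(z² + zb + 2z + b/2 + 1), where Φ(a,b) = {(a - r - s, b - r + s) : 0 ≤ r ≤ b, 0 ≤ s ≤ a-b}. -/
/-- The index set `Φ(a,b) = {(a-r-s, b-r+s) : 0 ≤ r ≤ b, 0 ≤ s ≤ a-b}` of pairs of
integers, indexing the `A₁×A₁` branching components of the irreducible
`sp₄`-representation with highest weight `(a,b)`. -/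
def PhiSet (a b : ℕ) : Finset (ℤ × ℤ) :=
  ((Finset.range (b + 1)) ×ˢ (Finset.range (a - b + 1))).image
    (fun rs => ((a : ℤ) - rs.1 - rs.2, (b : ℤ) - rs.1 + rs.2))

lemma sum_min_aux (z : ℕ) :
    ∑ s ∈ Finset.range (2*z+1), (min ((2*z : ℤ) - s) s + 1) = ((z:ℤ)+1)^2 := by
  have hsplit : ∑ s ∈ Finset.Ico 0 (2*z+1), (min ((2*z : ℤ) - s) s + 1)
      = ∑ s ∈ Finset.Ico 0 (z+1), (min ((2*z : ℤ) - s) s + 1)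
        + ∑ s ∈ Finset.Ico (z+1) (2*z+1), (min ((2*z : ℤ) - s) s + 1) :=
    (Finset.sum_Ico_consecutive _ (by omega) (by omega)).symm
  rw [Finset.range_eq_Ico, hsplit]
  have h1 : ∑ s ∈ Finset.Ico 0 (z+1), (min ((2*z : ℤ) - s) s + 1)
      = ∑ s ∈ Finset.range (z+1), ((s:ℤ) + 1) := by
    rw [← Finset.range_eq_Ico]
    refine Finset.sum_congr rfl fun s hs => ?_
    rw [Finset.mem_range] at hs
    rw [min_eq_right (by push_cast; omega)]
  have h2 : ∑ s ∈ Finset.Ico (z+1) (2*z+1), (min ((2*z : ℤ) - s) s + 1)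
      = ∑ k ∈ Finset.range z, ((z:ℤ) - k) := by
    rw [Finset.sum_Ico_eq_sum_range]
    have : 2*z+1 - (z+1) = z := by omega
    rw [this]
    refine Finset.sum_congr rfl fun k hk => ?_
    rw [Finset.mem_range] at hk
    rw [min_eq_left (by push_cast; omega)]
    push_cast; ring
  rw [h1, h2]
  have g1 : (∑ i ∈ Finset.range (z+1), (i:ℤ)) * 2 = (z+1) * z := by
    have := Finset.sum_range_id_mul_two (z+1)
    have : ((∑ i ∈ Finset.range (z+1), i) * 2 : ℤ) = ((z+1) * z : ℕ) := by
      exact_mod_cast congrArg (Nat.cast : ℕ → ℤ) (by simpa using this)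
    push_cast at this
    exact_mod_cast this
  have g2 : (∑ i ∈ Finset.range z, (i:ℤ)) * 2 = z * (z-1) := by
    rcases Nat.eq_zero_or_pos z with h | h
    · subst h; simp
    · have := Finset.sum_range_id_mul_two z
      have h3 : ((∑ i ∈ Finset.range z, i) * 2 : ℤ) = (z * (z-1) : ℕ) := by
        exact_mod_cast congrArg (Nat.cast : ℕ → ℤ) (by simpa using this)
      push_cast [h] at h3
      linarith
  rw [Finset.sum_add_distrib, Finset.sum_sub_distrib, Finset.sum_const, Finset.sum_const,
    Finset.card_range, Finset.card_range]
  simp only [nsmul_eq_mul, smul_eq_mul]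
  push_cast
  nlinarith [g1, g2]

lemma sum_b_sub (b : ℕ) :
    (∑ r ∈ Finset.range (b+1), ((b:ℤ) - r)) * 2 = b * (b+1) := by
  have g1 : (∑ i ∈ Finset.range (b+1), (i:ℤ)) * 2 = (b+1) * b := by
    have := Finset.sum_range_id_mul_two (b+1)
    have h : ((∑ i ∈ Finset.range (b+1), i) * 2 : ℤ) = ((b+1) * b : ℕ) := by
      exact_mod_cast congrArg (Nat.cast : ℕ → ℤ) (by simpa using this)
    push_cast at h
    exact_mod_cast h
  rw [Finset.sum_sub_distrib, Finset.sum_const, Finset.card_range]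
  simp only [nsmul_eq_mul, smul_eq_mul]
  push_cast
  linarith

/-- **Dimension of the zero-trace weight space of `V^{Sp(4)}_{(a,b)}` (the function `η₁`).**
For a partition `(a,b)` with `a - b` even and `z = (a-b)/2`, summing `min(p,q) + 1`
(the number of weights `μ` with `μ(ĥ₁+ĥ₂) = 0` in the minuscule `A₁×A₁`-component
of highest weight `(p,q)`) over `(p,q) ∈ Φ(a,b)` gives
`(b+1)(z² + zb + 2z + b/2 + 1)`. -/
theorem sum_min_over_Phi (a b : ℕ) (hba : b ≤ a) (hev : Even (a - b)) :
    ((∑ pq ∈ PhiSet a b, (min pq.1 pq.2 + 1) : ℤ) : ℚ)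
      = ((b : ℚ) + 1) * ((((a : ℚ) - b) / 2) ^ 2 + (((a : ℚ) - b) / 2) * b
          + 2 * (((a : ℚ) - b) / 2) + (b : ℚ) / 2 + 1) := by
  obtain ⟨z, hz⟩ : ∃ z, a = b + 2*z := by
    obtain ⟨k, hk⟩ := hev
    exact ⟨k, by omega⟩
  subst hz
  have hab : b + 2*z - b = 2*z := by omega
  have hinj : ∀ x ∈ (Finset.range (b+1)) ×ˢ (Finset.range (b + 2*z - b + 1)),
      ∀ y ∈ (Finset.range (b+1)) ×ˢ (Finset.range (b + 2*z - b + 1)),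
      (fun rs : ℕ × ℕ => (((b + 2*z : ℕ) : ℤ) - rs.1 - rs.2, (b : ℤ) - rs.1 + rs.2)) x
        = (fun rs : ℕ × ℕ => (((b + 2*z : ℕ) : ℤ) - rs.1 - rs.2, (b : ℤ) - rs.1 + rs.2)) y
        → x = y := by
    intro x _ y _ h
    simp only [Prod.mk.injEq] at h
    obtain ⟨h1, h2⟩ := h
    exact Prod.ext (by omega) (by omega)
  rw [PhiSet, Finset.sum_image hinj, Finset.sum_product]
  have hterm : ∀ r ∈ Finset.range (b+1),
      ∑ s ∈ Finset.range (b + 2*z - b + 1),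
        (min (((b + 2*z : ℕ) : ℤ) - r - s) ((b : ℤ) - r + s) + 1)
      = (2*(z:ℤ)+1) * ((b:ℤ) - r) + ((z:ℤ)+1)^2 := by
    intro r _
    have : ∀ s ∈ Finset.range (b + 2*z - b + 1),
        (min (((b + 2*z : ℕ) : ℤ) - r - s) ((b : ℤ) - r + s) + 1)
        = ((b:ℤ) - r) + (min ((2*z : ℤ) - s) s + 1) := by
      intro s _
      have e1 : ((b + 2*z : ℕ) : ℤ) - r - s = ((b:ℤ) - r) + ((2*z:ℤ) - s) := by
        push_cast; ring
      have e2 : ((b : ℤ)) - r + s = ((b:ℤ) - r) + (s:ℤ) := by ring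
      rw [e1, e2, min_add_add_left]
      ring
    rw [Finset.sum_congr rfl this, Finset.sum_add_distrib, Finset.sum_const,
      Finset.card_range, hab, sum_min_aux]
    simp only [nsmul_eq_mul]
    push_cast
    ring
  rw [Finset.sum_congr rfl hterm, Finset.sum_add_distrib, Finset.sum_const,
    Finset.card_range, ← Finset.mul_sum]
  have hb := sum_b_sub b
  set S := ∑ r ∈ Finset.range (b+1), ((b:ℤ) - r) with hS
  have hbQ : (S : ℚ) * 2 = b * (b+1) := by exact_mod_cast congrArg (Int.cast : ℤ → ℚ) hb
  simp only [nsmul_eq_mul]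
  push_cast
  have : ((b:ℚ) + 2*z - b)/2 = z := by ring
  rw [this]
  nlinarith [hbQ]
end

section
/- Let a ≥ b ≥ 0 with a - b even and z = (a-b)/2. The number of elements (p,q) in Φ(a,b) = {(a-r-s, b-r+s) : 0 ≤ r ≤ b, 0 ≤ s ≤ a-b} with both p and q even equals z(b+1) + ⌊b/2⌋ + 1. -/
lemma count_even_range (n : ℕ) :
    ((Finset.range n).filter (fun x => x % 2 = 0)).card = (n + 1) / 2 := by
  induction n with
  | zero => simp
  | succ n ih =>
    rw [Finset.range_add_one, Finset.filter_insert]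
    by_cases h : n % 2 = 0
    · rw [if_pos h, Finset.card_insert_of_notMem (by simp)]
      omega
    · rw [if_neg h]
      omega

lemma count_odd_range (n : ℕ) :
    ((Finset.range n).filter (fun x => x % 2 = 1)).card = n / 2 := by
  induction n with
  | zero => simp
  | succ n ih =>
    rw [Finset.range_add_one, Finset.filter_insert]
    by_cases h : n % 2 = 1
    · rw [if_pos h, Finset.card_insert_of_notMem (by simp)]
      omega
    · rw [if_neg h]
      omega


/-- **Zero-weight multiplicity of `V^{Sp(4)}_{(a,b)}` (the function `ξ₁`).**
For `a ≥ b ≥ 0` with `a - b` even and `z = (a-b)/2`, the number of pairs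
`(p,q) ∈ Φ(a,b)` with both `p` and `q` even equals `z(b+1) + ⌊b/2⌋ + 1`. -/
theorem count_even_even_in_Phi (a b : ℕ) (hba : b ≤ a) (hev : Even (a - b)) :
    ((PhiSet a b).filter (fun pq => Even pq.1 ∧ Even pq.2)).card
      = (a - b) / 2 * (b + 1) + b / 2 + 1 := by
  obtain ⟨z, hz⟩ := hev
  have hab : a = b + 2 * z := by omega
  have hinj : Function.Injective
      (fun rs : ℕ × ℕ => ((a : ℤ) - rs.1 - rs.2, (b : ℤ) - rs.1 + rs.2)) := by
    rintro ⟨r, s⟩ ⟨r', s'⟩ h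
    simp only [Prod.mk.injEq] at h
    have : r = r' ∧ s = s' := by omega
    simp [this.1, this.2]
  rw [PhiSet, Finset.filter_image, Finset.card_image_of_injective _ hinj]
  have hfe : ((Finset.range (b + 1)) ×ˢ (Finset.range (a - b + 1))).filter
        (fun rs : ℕ × ℕ => Even ((a : ℤ) - rs.1 - rs.2) ∧ Even ((b : ℤ) - rs.1 + rs.2))
      = ((Finset.range (b + 1)) ×ˢ (Finset.range (a - b + 1))).filter
        (fun rs : ℕ × ℕ => (rs.1 + rs.2) % 2 = b % 2) := by
    apply Finset.filter_congr
    rintro ⟨r, s⟩ _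
    simp only [Int.even_iff]
    constructor
    · rintro ⟨h1, h2⟩; omega
    · intro h; omega
  rw [hfe, Finset.card_filter, Finset.sum_product]
  have hinner : ∀ r ∈ Finset.range (b + 1),
      (∑ s ∈ Finset.range (a - b + 1), if (r + s) % 2 = b % 2 then 1 else 0)
      = z + (if r % 2 = b % 2 then 1 else 0) := by
    intro r _
    rw [← Finset.card_filter]
    by_cases h : r % 2 = b % 2
    · rw [if_pos h]
      have : (Finset.range (a - b + 1)).filter (fun s => (r + s) % 2 = b % 2)
          = (Finset.range (a - b + 1)).filter (fun s => s % 2 = 0) := by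
        apply Finset.filter_congr; intro s _; constructor <;> (intro; omega)
      rw [this, count_even_range]; omega
    · rw [if_neg h]
      have : (Finset.range (a - b + 1)).filter (fun s => (r + s) % 2 = b % 2)
          = (Finset.range (a - b + 1)).filter (fun s => s % 2 = 1) := by
        apply Finset.filter_congr; intro s _; constructor <;> (intro; omega)
      rw [this, count_odd_range]; omega
  rw [Finset.sum_congr rfl hinner, Finset.sum_add_distrib, Finset.sum_const,
    Finset.card_range, ← Finset.card_filter]
  have hcard : ((Finset.range (b + 1)).filter (fun r => r % 2 = b % 2)).card = b / 2 + 1 := by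
    by_cases hb : b % 2 = 0
    · have h1 : (Finset.range (b + 1)).filter (fun r => r % 2 = b % 2)
          = (Finset.range (b + 1)).filter (fun r => r % 2 = 0) := by
        apply Finset.filter_congr; intro r _; constructor <;> (intro; omega)
      rw [h1, count_even_range]; omega
    · have h1 : (Finset.range (b + 1)).filter (fun r => r % 2 = b % 2)
          = (Finset.range (b + 1)).filter (fun r => r % 2 = 1) := by
        apply Finset.filter_congr; intro r _; constructor <;> (intro; omega)
      rw [h1, count_odd_range]; omega
  rw [hcard, smul_eq_mul]
  have hz2 : (a - b) / 2 = z := by omega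
  rw [hz2]; ring
end

section
/- The trivial sl₂ × sl₂ representation V_{A₁}(0) ⊠ V_{A₁}(0) appears in the restriction of the irreducible sp₄(ℂ)-representation V(a,b) to sl₂ × sl₂ (embedded via the two long-root sl₂'s) if and only if a = b, and then with multiplicity one. -/
/-- **Occurrence of the trivial `sl₂ × sl₂`-representation.**
Since the branching of `V(a,b)` to `sl₂ × sl₂` is multiplicity-free with components
indexed by `Φ(a,b)`, the trivial representation `V_{A₁}(0) ⊠ V_{A₁}(0)` appears in the
restriction (necessarily with multiplicity one) if and only if `a = b`. -/
theorem trivial_component_iff_eq (a b : ℕ) (hba : b ≤ a) :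
    ((0, 0) : ℤ × ℤ) ∈ PhiSet a b ↔ a = b := by
  simp only [PhiSet, Finset.mem_image, Finset.mem_product, Finset.mem_range, Prod.exists,
    Prod.mk.injEq]
  constructor
  · rintro ⟨r, s, ⟨hr, hs⟩, h1, h2⟩
    omega
  · intro h
    exact ⟨b, 0, ⟨Nat.lt_succ_self b, by omega⟩, by push_cast; omega, by push_cast; omega⟩
end
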